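/- arXiv:2601.04239 — 4 statements merged into one kernel-verified Lean document; each statement's English description precedes it below -/
import Mathlib

section
/- If each of n Boolean variables arranged on a cycle satisfies the Cyclic Ladder constraint of width w (at most one true variable in every cyclic window of w consecutive positions), then the total number of true variables is at most ⌊n/w⌋, provided w ≤ n. -/
lemma cyc_shift_sum (n j : ℕ) (hn : 0 < n) (g : ℕ → ℕ) :
    ∑ k ∈ Finset.range n, g ((k + j) % n) = ∑ k ∈ Finset.range n, g k := by
  have hdm : n * (j / n) + j % n = j := Nat.div_add_mod j n
  have hjn : j % n < n := Nat.mod_lt _ hn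
  apply Finset.sum_nbij' (i := fun k => (k + j) % n) (j := fun k => (k + (n - j % n)) % n)
  · intro a ha
    exact Finset.mem_range.mpr (Nat.mod_lt _ hn)
  · intro a ha
    exact Finset.mem_range.mpr (Nat.mod_lt _ hn)
  · intro a ha
    have ha' := Finset.mem_range.mp ha
    rw [Nat.mod_add_mod]
    have he : a + j + (n - j % n) = a + n * (j / n) + n := by omega
    rw [he, Nat.add_mod_right, Nat.add_mul_mod_self_left, Nat.mod_eq_of_lt ha']
  · intro b hb
    have hb' := Finset.mem_range.mp hb
    rw [Nat.mod_add_mod]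
    have he : b + (n - j % n) + j = b + n * (j / n) + n + (n - j % n) - (n - j % n) := by omega
    have he2 : b + (n - j % n) + j = b + n * (j / n) + n := by omega
    rw [he2, Nat.add_mod_right, Nat.add_mul_mod_self_left, Nat.mod_eq_of_lt hb']
  · intro a ha
    rfl

theorem cyclic_ladder_total_bound (n w : ℕ) (hw : 1 ≤ w) (hwn : w ≤ n)
    (x : ℕ → Bool)
    (h : ∀ i ∈ Finset.Icc 1 n,
      (∑ j ∈ Finset.range w, (if x ((i + j - 1) % n + 1) then (1:ℕ) else 0)) ≤ 1) :
    (∑ i ∈ Finset.Icc 1 n, (if x i then (1:ℕ) else 0)) ≤ n / w := by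
  have hn : 0 < n := lt_of_lt_of_le hw hwn
  set g : ℕ → ℕ := fun k => if x (k + 1) then (1:ℕ) else 0 with hg
  set S : ℕ := ∑ i ∈ Finset.Icc 1 n, (if x i then (1:ℕ) else 0) with hS
  -- rewrite S as a sum over range n
  have hS' : S = ∑ k ∈ Finset.range n, g k := by
    rw [hS, show Finset.Icc 1 n = Finset.Ico 1 (n+1) from (Finset.Ico_add_one_right_eq_Icc 1 n).symm,
      Finset.sum_Ico_eq_sum_range]
    simp [hg, Nat.add_comm]
  -- total of all window sums
  have htot : ∑ i ∈ Finset.Icc 1 n,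
      (∑ j ∈ Finset.range w, (if x ((i + j - 1) % n + 1) then (1:ℕ) else 0)) = w * S := by
    rw [show Finset.Icc 1 n = Finset.Ico 1 (n+1) from (Finset.Ico_add_one_right_eq_Icc 1 n).symm,
      Finset.sum_Ico_eq_sum_range]
    have : ∀ k ∈ Finset.range (n + 1 - 1),
        (∑ j ∈ Finset.range w, (if x ((1 + k + j - 1) % n + 1) then (1:ℕ) else 0))
        = ∑ j ∈ Finset.range w, g ((k + j) % n) := by
      intro k hk
      apply Finset.sum_congr rfl
      intro j hj
      have : 1 + k + j - 1 = k + j := by omega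
      rw [this]
    rw [Finset.sum_congr rfl this, Finset.sum_comm]
    have : ∀ j ∈ Finset.range w,
        ∑ k ∈ Finset.range (n + 1 - 1), g ((k + j) % n) = S := by
      intro j hj
      have h1 : n + 1 - 1 = n := by omega
      rw [h1, cyc_shift_sum n j hn g, hS']
    rw [Finset.sum_congr rfl this, Finset.sum_const, Finset.card_range, smul_eq_mul]
  have hle : w * S ≤ n := by
    calc w * S = ∑ i ∈ Finset.Icc 1 n,
        (∑ j ∈ Finset.range w, (if x ((i + j - 1) % n + 1) then (1:ℕ) else 0)) := htot.symm
      _ ≤ ∑ i ∈ Finset.Icc 1 n, 1 := Finset.sum_le_sum h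
      _ = n := by simp
  rw [Nat.le_div_iff_mul_le hw, mul_comm]
  exact hle
end

section
/- Sequential counter correctness for a block: let x_1,…,x_w be Boolean variables and R_1,…,R_w Boolean variables with R_1 = x_1. If the clauses (x_j → R_j), (R_{j−1} → R_j), (¬x_j ∧ ¬R_{j−1} → ¬R_j), and (x_j → ¬R_{j−1}) hold for all 2 ≤ j ≤ w, then: (i) at most one of x_1,…,x_w is true, and (ii) for each j, R_j is true if and only if at least one of x_1,…,x_j is true. -/
theorem sequential_counter_correctness (w : ℕ) (hw : 1 ≤ w) (x R : ℕ → Bool)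
    (hR1 : R 1 = x 1)
    (h1 : ∀ j, 2 ≤ j → j ≤ w → x j = true → R j = true)
    (h2 : ∀ j, 2 ≤ j → j ≤ w → R (j - 1) = true → R j = true)
    (h3 : ∀ j, 2 ≤ j → j ≤ w → x j = false → R (j - 1) = false → R j = false)
    (h4 : ∀ j, 2 ≤ j → j ≤ w → x j = true → R (j - 1) = false) :
    ((∑ j ∈ Finset.Icc 1 w, (if x j then (1:ℕ) else 0)) ≤ 1) ∧
    (∀ j ∈ Finset.Icc 1 w, (R j = true ↔ ∃ j' ∈ Finset.Icc 1 j, x j' = true)) := by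
  have key : ∀ j, 1 ≤ j → j ≤ w → (R j = true ↔ ∃ j' ∈ Finset.Icc 1 j, x j' = true) := by
    intro j
    induction j with
    | zero => omega
    | succ n ih =>
      intro h1j hjw
      rcases Nat.eq_zero_or_pos n with hn | hn
      · subst hn
        rw [hR1]
        constructor
        · intro hx; exact ⟨1, by simp, hx⟩
        · rintro ⟨j', hj', hx⟩
          simp only [Finset.mem_Icc] at hj'
          have : j' = 1 := by omega
          subst this; exact hx
      · have h2n : 2 ≤ n + 1 := by omega
        have hnw : n ≤ w := by omega
        have ihn := ih hn hnw
        have hsub : n + 1 - 1 = n := by omega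
        constructor
        · intro hR
          cases hx : x (n + 1) with
          | true => exact ⟨n + 1, Finset.mem_Icc.mpr ⟨by omega, by omega⟩, hx⟩
          | false =>
            cases hRn : R n with
            | true =>
              obtain ⟨j', hj', hxj⟩ := ihn.mp hRn
              simp only [Finset.mem_Icc] at hj'
              exact ⟨j', Finset.mem_Icc.mpr ⟨by omega, by omega⟩, hxj⟩
            | false =>
              have := h3 (n + 1) h2n hjw hx (by rw [hsub]; exact hRn)
              rw [this] at hR; exact absurd hR (by simp)
        · rintro ⟨j', hj', hxj⟩
          simp only [Finset.mem_Icc] at hj'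
          rcases Nat.lt_or_ge j' (n + 1) with hlt | hge
          · have hRn : R n = true := ihn.mpr ⟨j', Finset.mem_Icc.mpr ⟨hj'.1, by omega⟩, hxj⟩
            exact h2 (n + 1) h2n hjw (by rw [hsub]; exact hRn)
          · have : j' = n + 1 := by omega
            subst this
            exact h1 (n + 1) h2n hjw hxj
  constructor
  · have huniq : ∀ a ∈ Finset.Icc 1 w, ∀ b ∈ Finset.Icc 1 w,
        x a = true → x b = true → a = b := by
      have haux : ∀ a b, 1 ≤ a → b ≤ w → a < b → x a = true → x b = true → False := by
        intro a b ha1 hbw hab hxa hxb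
        have h2b : 2 ≤ b := by omega
        have hRb : R (b - 1) = false := h4 b h2b hbw hxb
        have hRb' : R (b - 1) = true :=
          (key (b - 1) (by omega) (by omega)).mpr
            ⟨a, Finset.mem_Icc.mpr ⟨ha1, by omega⟩, hxa⟩
        rw [hRb] at hRb'; exact absurd hRb' (by simp)
      intro a ha b hb hxa hxb
      simp only [Finset.mem_Icc] at ha hb
      rcases lt_trichotomy a b with h | h | h
      · exact absurd (haux a b ha.1 hb.2 h hxa hxb) (by simp)
      · exact h
      · exact absurd (haux b a hb.1 ha.2 h hxb hxa) (by simp)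
    calc (∑ j ∈ Finset.Icc 1 w, (if x j then (1:ℕ) else 0))
        = ((Finset.Icc 1 w).filter (fun j => x j = true)).card := by
          rw [Finset.card_filter]
      _ ≤ 1 := Finset.card_le_one.mpr (by
          intro a ha b hb
          simp only [Finset.mem_filter] at ha hb
          exact huniq a ha.1 b hb.1 ha.2 hb.2)
  · intro j hj
    simp only [Finset.mem_Icc] at hj
    exact key j hj.1 hj.2
end

section
/- Sequential counter completeness for a block: if at most one of the Boolean variables x_1,…,x_w is true, then setting R_j = (x_1 ∨ x_2 ∨ ⋯ ∨ x_j) for each j yields an assignment satisfying all the clauses (x_j → R_j), (R_{j−1} → R_j), (¬x_j ∧ ¬R_{j−1} → ¬R_j), and (x_j → ¬R_{j−1}) for 2 ≤ j ≤ w. -/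
theorem sequential_counter_completeness (w : ℕ) (x : ℕ → Bool)
    (h : (∑ j ∈ Finset.Icc 1 w, (if x j then (1:ℕ) else 0)) ≤ 1) :
    ∀ j, 2 ≤ j → j ≤ w →
      ((x j = true → (∃ j' ∈ Finset.Icc 1 j, x j' = true)) ∧
       ((∃ j' ∈ Finset.Icc 1 (j - 1), x j' = true) → (∃ j' ∈ Finset.Icc 1 j, x j' = true)) ∧
       (x j = false → ¬(∃ j' ∈ Finset.Icc 1 (j - 1), x j' = true) →
          ¬(∃ j' ∈ Finset.Icc 1 j, x j' = true)) ∧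
       (x j = true → ¬(∃ j' ∈ Finset.Icc 1 (j - 1), x j' = true))) := by
  intro j hj2 hjw
  refine ⟨?_, ?_, ?_, ?_⟩
  · intro hx
    exact ⟨j, Finset.mem_Icc.mpr ⟨by omega, le_rfl⟩, hx⟩
  · rintro ⟨j', hj', hx⟩
    rw [Finset.mem_Icc] at hj'
    exact ⟨j', Finset.mem_Icc.mpr ⟨hj'.1, by omega⟩, hx⟩
  · intro hxf hne ⟨j', hj', hx⟩
    rw [Finset.mem_Icc] at hj'
    rcases eq_or_lt_of_le hj'.2 with heq | hlt
    · rw [heq] at hx; simp [hxf] at hx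
    · exact hne ⟨j', Finset.mem_Icc.mpr ⟨hj'.1, by omega⟩, hx⟩
  · intro hx ⟨j', hj', hx'⟩
    rw [Finset.mem_Icc] at hj'
    have hsub : ({j', j} : Finset ℕ) ⊆ Finset.Icc 1 w := by
      intro a ha
      simp only [Finset.mem_insert, Finset.mem_singleton] at ha
      rcases ha with rfl | rfl <;> exact Finset.mem_Icc.mpr ⟨by omega, by omega⟩
    have hne : j' ≠ j := by omega
    have h2 : (∑ i ∈ ({j', j} : Finset ℕ), (if x i then (1:ℕ) else 0)) = 2 := by
      rw [Finset.sum_pair hne, hx, hx']; rfl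
    have hle := Finset.sum_le_sum_of_subset (f := fun i => if x i then (1:ℕ) else 0) hsub
    rw [h2] at hle
    omega
end

section
/- Connecting clause correctness: let A = x_1,…,x_a and B = y_1,…,y_b be two disjoint families of Boolean variables, let R_A be true iff at least one x is true and R_B be true iff at least one y is true. Then (at most one of x_1,…,x_a,y_1,…,y_b is true) if and only if (at most one x is true) ∧ (at most one y is true) ∧ (¬R_A ∨ ¬R_B). -/
theorem connecting_clause_correctness (a b : ℕ) (x y : ℕ → Bool) :
    ((∑ i ∈ Finset.Icc 1 a, (if x i then (1:ℕ) else 0)) +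
     (∑ i ∈ Finset.Icc 1 b, (if y i then (1:ℕ) else 0)) ≤ 1) ↔
      ((∑ i ∈ Finset.Icc 1 a, (if x i then (1:ℕ) else 0)) ≤ 1 ∧
       (∑ i ∈ Finset.Icc 1 b, (if y i then (1:ℕ) else 0)) ≤ 1 ∧
       (¬(∃ i ∈ Finset.Icc 1 a, x i = true) ∨ ¬(∃ i ∈ Finset.Icc 1 b, y i = true))) := by
  have key : ∀ (n : ℕ) (f : ℕ → Bool), (∃ i ∈ Finset.Icc 1 n, f i = true) ↔
      0 < ∑ i ∈ Finset.Icc 1 n, (if f i then (1:ℕ) else 0) := by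
    intro n f
    rw [Nat.pos_iff_ne_zero, Ne, Finset.sum_eq_zero_iff]
    push_neg
    constructor
    · rintro ⟨i, hi, hfi⟩; exact ⟨i, hi, by simp [hfi]⟩
    · rintro ⟨i, hi, hfi⟩; refine ⟨i, hi, ?_⟩; by_contra h; simp [h] at hfi
  rw [key a x, key b y]
  omega
end
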